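/- arXiv:1401.0744 — 4 statements merged into one kernel-verified Lean document; each statement's English description precedes it below -/
import Mathlib

section
/- Let G be a Lie group with identity e and let f : G → (ℝ⁺, ·) be a smooth homomorphism of Lie groups into the multiplicative group of positive reals. If G admits an f-bi-invariant Riemannian metric ⟨·,·⟩, then the induced inner product ⟨·,·⟩_e on T_eG is Ad-invariant, i.e. ⟨Ad_a X, Ad_a Y⟩_e = ⟨X, Y⟩_e for all a ∈ G and X, Y ∈ T_eG. -/
/-!
Conjugation `x ↦ a x a⁻¹` is right translation by `a⁻¹` after left translation by `a`, so the two
invariance conditions make it conformal at `x` with factor `f (a x a⁻¹) / f (a x) · f (a x) / f x`.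
When `f` is a homomorphism into the commutative group `ℝ⁺` this factor is `f x / f x = 1`.
-/

open scoped Manifold

noncomputable section

/-- A (smooth) Riemannian metric on a manifold `G` modeled on `(E, H)` via `I`:
a smooth family of inner products `⟨·,·⟩ₐ` on the tangent spaces `TangentSpace I a` (each of
which is, by definition, canonically `E`).  Smoothness is expressed through this canonical
identification `TangentSpace I a = E`. -/
structure SmoothRiemannianMetric {E : Type*} [NormedAddCommGroup E] [NormedSpace ℝ E]
    {H : Type*} [TopologicalSpace H] (I : ModelWithCorners ℝ E H)
    (G : Type*) [TopologicalSpace G] [ChartedSpace H G] where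
  /-- the inner product `⟨·,·⟩ₐ` on the tangent space `TangentSpace I a = E` at each point -/
  metric : G → E →L[ℝ] E →L[ℝ] ℝ
  symm : ∀ (a : G) (X Y : TangentSpace I a), metric a X Y = metric a Y X
  pos : ∀ (a : G) (X : TangentSpace I a), X ≠ 0 → 0 < metric a X X
  smooth : ContMDiff I 𝓘(ℝ, E →L[ℝ] E →L[ℝ] ℝ) (⊤ : ℕ∞) metric

/-- The Riemannian metric `g` on the Lie group `G` is `f`-left invariant if
`⟨(dL_b)ₐ X, (dL_b)ₐ Y⟩_{b*a} = (f (b*a) / f a) * ⟨X, Y⟩ₐ` for all `a b : G` and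
`X, Y ∈ TₐG`, where `L_b` is left translation by `b`. -/
def IsFLeftInvariant {E : Type*} [NormedAddCommGroup E] [NormedSpace ℝ E]
    {H : Type*} [TopologicalSpace H] (I : ModelWithCorners ℝ E H)
    {G : Type*} [TopologicalSpace G] [ChartedSpace H G] [Group G]
    (f : G → ℝ) (g : SmoothRiemannianMetric I G) : Prop :=
  ∀ (a b : G) (X Y : TangentSpace I a),
    g.metric (b * a) (mfderiv I I (fun x => b * x) a X) (mfderiv I I (fun x => b * x) a Y)
      = (f (b * a) / f a) * g.metric a X Y

/-- The Riemannian metric `g` on the Lie group `G` is `f`-right invariant if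
`⟨(dR_b)ₐ X, (dR_b)ₐ Y⟩_{a*b} = (f (a*b) / f a) * ⟨X, Y⟩ₐ` for all `a b : G` and
`X, Y ∈ TₐG`, where `R_b` is right translation by `b`. -/
def IsFRightInvariant {E : Type*} [NormedAddCommGroup E] [NormedSpace ℝ E]
    {H : Type*} [TopologicalSpace H] (I : ModelWithCorners ℝ E H)
    {G : Type*} [TopologicalSpace G] [ChartedSpace H G] [Group G]
    (f : G → ℝ) (g : SmoothRiemannianMetric I G) : Prop :=
  ∀ (a b : G) (X Y : TangentSpace I a),
    g.metric (a * b) (mfderiv I I (fun x => x * b) a X) (mfderiv I I (fun x => x * b) a Y)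
      = (f (a * b) / f a) * g.metric a X Y

theorem map_one_of_map_mul {G M₀ : Type*} [MulOneClass G] [MonoidWithZero M₀]
    [IsLeftCancelMulZero M₀] {f : G → M₀} (h1 : f 1 ≠ 0) (hmul : ∀ a b : G, f (a * b) = f a * f b) :
    f 1 = 1 :=
  (mul_eq_left₀ h1).mp (by rw [← hmul, one_mul])

theorem map_conj_of_map_mul {G M : Type*} [Group G] [CommMonoid M] {f : G → M} (h1 : f 1 = 1)
    (hmul : ∀ a b : G, f (a * b) = f a * f b) (a x : G) : f (a * x * a⁻¹) = f x := by
  rw [hmul, hmul, mul_right_comm, ← hmul, mul_inv_cancel, h1, one_mul]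

section Conjugation

variable {E : Type*} [NormedAddCommGroup E] [NormedSpace ℝ E]
  {H : Type*} [TopologicalSpace H] {I : ModelWithCorners ℝ E H}
  {G : Type*} [TopologicalSpace G] [ChartedSpace H G] [Group G]

theorem mfderiv_conj_apply [ContMDiffMul I 1 G] (a x : G) (X : TangentSpace I x) :
    mfderiv I I (fun y => a * y * a⁻¹) x X
      = mfderiv I I (fun y => y * a⁻¹) (a * x) (mfderiv I I (fun y => a * y) x X) :=
  mfderiv_comp_apply (f := fun y => a * y) (g := fun y => y * a⁻¹) x
    mdifferentiableAt_mul_right mdifferentiableAt_mul_left X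

theorem metric_mfderiv_conj [ContMDiffMul I 1 G] {f : G → ℝ} {g : SmoothRiemannianMetric I G}
    (hgl : IsFLeftInvariant I f g) (hgr : IsFRightInvariant I f g) (a x : G)
    (hax : f (a * x) ≠ 0) (X Y : TangentSpace I x) :
    g.metric (a * x * a⁻¹) (mfderiv I I (fun y => a * y * a⁻¹) x X)
        (mfderiv I I (fun y => a * y * a⁻¹) x Y)
      = f (a * x * a⁻¹) / f x * g.metric x X Y := by
  rw [mfderiv_conj_apply, mfderiv_conj_apply, hgr (a * x) a⁻¹, hgl x a, ← mul_assoc,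
    div_mul_div_cancel₀ hax]

end Conjugation

theorem adInvariant_of_fBiInvariant_of_hom_general
    {E : Type*} [NormedAddCommGroup E] [NormedSpace ℝ E]
    {H : Type*} [TopologicalSpace H] (I : ModelWithCorners ℝ E H)
    (G : Type*) [TopologicalSpace G] [ChartedSpace H G] [Group G] [LieGroup I (⊤ : ℕ∞) G]
    (f : G → ℝ) (hfpos : ∀ a, 0 < f a)
    (hfhom : ∀ a b : G, f (a * b) = f a * f b)
    (g : SmoothRiemannianMetric I G)
    (hgl : IsFLeftInvariant I f g) (hgr : IsFRightInvariant I f g) :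
    ∀ (a : G) (X Y : TangentSpace I (1 : G)),
      g.metric 1 (mfderiv I I (fun x => a * x * a⁻¹) 1 X)
          (mfderiv I I (fun x => a * x * a⁻¹) 1 Y)
        = g.metric 1 X Y := by
  intro a X Y
  have hf1 : f 1 = 1 := map_one_of_map_mul (hfpos 1).ne' hfhom
  have hconj := metric_mfderiv_conj hgl hgr a 1 (hfpos _).ne' X Y
  rwa [map_conj_of_map_mul hf1 hfhom, div_self (hfpos 1).ne', one_mul, mul_one, mul_inv_cancel]
    at hconj

/-- If `f : G → (ℝ⁺, ·)` is a smooth homomorphism of Lie groups and `G` admits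
an `f`-bi-invariant Riemannian metric `⟨·,·⟩`, then the induced inner product `⟨·,·⟩ₑ` on `TₑG`
is `Ad`-invariant: `⟨Ad_a X, Ad_a Y⟩ₑ = ⟨X, Y⟩ₑ`, where `Ad_a` is the differential at `e` of the
conjugation map `x ↦ a * x * a⁻¹`. -/
theorem adInvariant_of_fBiInvariant_of_hom
    {E : Type*} [NormedAddCommGroup E] [NormedSpace ℝ E]
    {H : Type*} [TopologicalSpace H] (I : ModelWithCorners ℝ E H)
    (G : Type*) [TopologicalSpace G] [ChartedSpace H G] [Group G] [LieGroup I (⊤ : ℕ∞) G]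
    (f : G → ℝ) (hf : ContMDiff I 𝓘(ℝ, ℝ) (⊤ : ℕ∞) f) (hfpos : ∀ a, 0 < f a)
    (hfhom : ∀ a b : G, f (a * b) = f a * f b)
    (g : SmoothRiemannianMetric I G)
    (hgl : IsFLeftInvariant I f g) (hgr : IsFRightInvariant I f g) :
    ∀ (a : G) (X Y : TangentSpace I (1 : G)),
      g.metric 1 (mfderiv I I (fun x => a * x * a⁻¹) 1 X)
          (mfderiv I I (fun x => a * x * a⁻¹) 1 Y)
        = g.metric 1 X Y :=
  adInvariant_of_fBiInvariant_of_hom_general I G f hfpos hfhom g hgl hgr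
end
end

section
/- Let G be a Lie group with identity e, let f : G → ℝ be a smooth positive function with f(e) = 1, and let ⟨·,·⟩ be an f-left invariant Riemannian metric on G. If the induced inner product ⟨·,·⟩_e on T_eG is Ad(G)-invariant (⟨Ad_a X, Ad_a Y⟩_e = ⟨X, Y⟩_e for all a ∈ G and X, Y ∈ T_eG), then ⟨·,·⟩ is also f-right invariant, hence f-bi-invariant. -/
open scoped Manifold

noncomputable section

/-! Right translation factors as `R_b = L_{ab} ∘ C_{b⁻¹} ∘ L_{a⁻¹}` with `C_c x = c x c⁻¹`, so
`(dR_b)ₐ` passes through `T₁G`. The two left translations rescale the metric by `f (a b)` and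
`1 / f a` (as `f 1 = 1`), and `Ad_{b⁻¹} = (dC_{b⁻¹})₁` preserves `⟨·,·⟩₁`. -/

theorem mfderiv_mul_right_apply_eq_conj {𝕜 : Type*} [NontriviallyNormedField 𝕜]
    {E : Type*} [NormedAddCommGroup E] [NormedSpace 𝕜 E]
    {H : Type*} [TopologicalSpace H] {I : ModelWithCorners 𝕜 E H}
    {G : Type*} [TopologicalSpace G] [ChartedSpace H G] [Group G] [ContMDiffMul I 1 G]
    (a b : G) (X : TangentSpace I a) :
    mfderiv I I (fun x => x * b) a X
      = mfderiv I I (fun x => (a * b) * x) 1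
          (mfderiv I I (fun x => b⁻¹ * x * b⁻¹⁻¹) 1 (mfderiv I I (fun x => a⁻¹ * x) a X)) := by
  have hconj : MDifferentiableAt I I (fun x : G => b⁻¹ * x * b⁻¹⁻¹) 1 :=
    mdifferentiableAt_mul_right.comp 1 mdifferentiableAt_mul_left
  have hfactor : (fun x : G => x * b)
      = (fun x => (a * b) * x) ∘ (fun x => b⁻¹ * x * b⁻¹⁻¹) ∘ (fun x => a⁻¹ * x) := by
    funext x
    simp [mul_assoc]
  rw [hfactor]
  exact (mfderiv_comp_apply_of_eq a (y := 1) mdifferentiableAt_mul_left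
      (hconj.comp_of_eq a mdifferentiableAt_mul_left (inv_mul_cancel a)) (by simp) X).trans
    (congrArg _ (mfderiv_comp_apply_of_eq a hconj mdifferentiableAt_mul_left (inv_mul_cancel a) X))

namespace IsFLeftInvariant

variable {E : Type*} [NormedAddCommGroup E] [NormedSpace ℝ E]
  {H : Type*} [TopologicalSpace H] {I : ModelWithCorners ℝ E H}
  {G : Type*} [TopologicalSpace G] [ChartedSpace H G] [Group G]
  {f : G → ℝ} {g : SmoothRiemannianMetric I G}

theorem metric_mfderiv_mul_left_one (hgl : IsFLeftInvariant I f g) (hfe : f 1 = 1) (c : G)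
    (X Y : TangentSpace I (1 : G)) :
    g.metric c (mfderiv I I (fun x => c * x) 1 X) (mfderiv I I (fun x => c * x) 1 Y)
      = f c * g.metric 1 X Y := by
  simpa [hfe] using hgl 1 c X Y

theorem metric_mfderiv_inv_mul_left (hgl : IsFLeftInvariant I f g) (hfe : f 1 = 1) (a : G)
    (X Y : TangentSpace I a) :
    g.metric 1 (mfderiv I I (fun x => a⁻¹ * x) a X) (mfderiv I I (fun x => a⁻¹ * x) a Y)
      = (f a)⁻¹ * g.metric a X Y := by
  simpa [hfe] using hgl a a⁻¹ X Y

end IsFLeftInvariant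

theorem fRightInvariant_of_adInvariant_general
    {E : Type*} [NormedAddCommGroup E] [NormedSpace ℝ E]
    {H : Type*} [TopologicalSpace H] (I : ModelWithCorners ℝ E H)
    (G : Type*) [TopologicalSpace G] [ChartedSpace H G] [Group G] [LieGroup I (⊤ : ℕ∞) G]
    (f : G → ℝ) (hfe : f 1 = 1)
    (g : SmoothRiemannianMetric I G) (hgl : IsFLeftInvariant I f g)
    (had : ∀ (a : G) (X Y : TangentSpace I (1 : G)),
      g.metric 1 (mfderiv I I (fun x => a * x * a⁻¹) 1 X)
          (mfderiv I I (fun x => a * x * a⁻¹) 1 Y)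
        = g.metric 1 X Y) :
    IsFRightInvariant I f g := by
  intro a b X Y
  calc g.metric (a * b) (mfderiv I I (fun x => x * b) a X) (mfderiv I I (fun x => x * b) a Y)
      = f (a * b) * g.metric 1 (mfderiv I I (fun x => a⁻¹ * x) a X)
          (mfderiv I I (fun x => a⁻¹ * x) a Y) := by
        rw [mfderiv_mul_right_apply_eq_conj, mfderiv_mul_right_apply_eq_conj]
        -- `rw` fails here: `(dL_{a⁻¹})ₐ X` lives in `T_{a⁻¹a}G`, only defeq to `T₁G`
        exact (hgl.metric_mfderiv_mul_left_one hfe (a * b) _ _).trans (congrArg _ (had b⁻¹ _ _))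
    _ = f (a * b) / f a * g.metric a X Y := by
        rw [hgl.metric_mfderiv_inv_mul_left hfe, div_eq_mul_inv, mul_assoc]

/-- If an `f`-left invariant Riemannian metric on a Lie group `G` induces an
`Ad(G)`-invariant inner product at the identity, then it is also `f`-right invariant, hence
`f`-bi-invariant. -/
theorem fRightInvariant_of_adInvariant
    {E : Type*} [NormedAddCommGroup E] [NormedSpace ℝ E]
    {H : Type*} [TopologicalSpace H] (I : ModelWithCorners ℝ E H)
    (G : Type*) [TopologicalSpace G] [ChartedSpace H G] [Group G] [LieGroup I (⊤ : ℕ∞) G]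
    (f : G → ℝ) (hf : ContMDiff I 𝓘(ℝ, ℝ) (⊤ : ℕ∞) f) (hfpos : ∀ a, 0 < f a) (hfe : f 1 = 1)
    (g : SmoothRiemannianMetric I G) (hgl : IsFLeftInvariant I f g)
    (had : ∀ (a : G) (X Y : TangentSpace I (1 : G)),
      g.metric 1 (mfderiv I I (fun x => a * x * a⁻¹) 1 X)
          (mfderiv I I (fun x => a * x * a⁻¹) 1 Y)
        = g.metric 1 X Y) :
    IsFRightInvariant I f g :=
  fRightInvariant_of_adInvariant_general I G f hfe g hgl had
end
end

section
/- Let G be a Lie group with identity e, let f : G → ℝ be a smooth positive function with f(e) = 1, and let ⟨·,·⟩ be an f-left invariant Riemannian metric on G. If ⟨·,·⟩ is also f-right invariant (hence f-bi-invariant), then for the inversion map ζ : G → G, ζ(a) = a⁻¹, one has f(a)·⟨(dζ)_a X, (dζ)_a Y⟩_{a⁻¹} = f(a⁻¹)·⟨X, Y⟩_a for all a ∈ G and X, Y ∈ T_aG. -/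
open scoped Manifold

noncomputable section

/-! Since `x⁻¹ = (a⁻¹ * x)⁻¹ * a⁻¹`, the chain rule gives
`(dζ)ₐ = (dR_{a⁻¹})ₑ ∘ (dζ)ₑ ∘ (dL_{a⁻¹})ₐ`, and differentiating `x * x⁻¹ = e` at `e` shows
`(dζ)ₑ = -id`. The sign disappears in the bilinear form, and right invariance at `e` followed
by left invariance at `a` produce the factor `(f a⁻¹ / f e) * (f e / f a) = f a⁻¹ / f a`. -/

section Monoid

variable {E : Type*} [NormedAddCommGroup E] [NormedSpace ℝ E]
  {H : Type*} [TopologicalSpace H] {I : ModelWithCorners ℝ E H}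
  {G : Type*} [TopologicalSpace G] [ChartedSpace H G] [Monoid G]
  {n : WithTop ℕ∞} [ContMDiffMul I n G]

theorem mfderiv_mul_apply {E' : Type*} [NormedAddCommGroup E'] [NormedSpace ℝ E']
    {H' : Type*} [TopologicalSpace H'] {I' : ModelWithCorners ℝ E' H'}
    {M : Type*} [TopologicalSpace M] [ChartedSpace H' M] (hn : n ≠ 0)
    {φ ψ : M → G} {x : M} (hφ : MDifferentiableAt I' I φ x) (hψ : MDifferentiableAt I' I ψ x)
    (v : TangentSpace I' x) :
    mfderiv I' I (fun y => φ y * ψ y) x v =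
      mfderiv I I (· * ψ x) (φ x) (mfderiv I' I φ x v) +
        mfderiv I I (φ x * ·) (ψ x) (mfderiv I' I ψ x v) := by
  have hmul : MDifferentiableAt (I.prod I) I (fun p : G × G => p.1 * p.2) (φ x, ψ x) :=
    (contMDiff_mul I n).mdifferentiable hn _
  rw [show (fun y => φ y * ψ y) = (fun p : G × G => p.1 * p.2) ∘ fun y => (φ y, ψ y) from rfl,
    mfderiv_comp_apply x hmul (hφ.prodMk hψ), mfderiv_prodMk hφ hψ,
    mfderiv_prod_eq_add_apply hmul]
  rfl

end Monoid

section LieGroup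

variable {E : Type*} [NormedAddCommGroup E] [NormedSpace ℝ E]
  {H : Type*} [TopologicalSpace H] {I : ModelWithCorners ℝ E H}
  {G : Type*} [TopologicalSpace G] [ChartedSpace H G] [Group G]
  {n : WithTop ℕ∞} [LieGroup I n G]

theorem mfderiv_inv_one (hn : n ≠ 0) (v : E) :
    mfderiv I I (fun x : G => x⁻¹) 1 v = -v := by
  have hinv : MDifferentiableAt I I (fun x : G => x⁻¹) 1 :=
    (contMDiff_inv I n).mdifferentiable hn _
  have h := mfderiv_mul_apply hn mdifferentiableAt_id hinv v
  have hconst : (fun y : G => id y * y⁻¹) = fun _ => 1 := funext mul_inv_cancel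
  have hright : (fun y : G => y * (1 : G)⁻¹) = id := funext fun y => by simp
  have hleft : (fun y : G => id 1 * y) = id := funext one_mul
  rw [hconst, hright, hleft, mfderiv_const] at h
  simp only [mfderiv_id] at h
  exact eq_neg_of_add_eq_zero_right h.symm

theorem mfderiv_inv_apply (hn : n ≠ 0) (a : G) (v : TangentSpace I a) :
    mfderiv I I (fun x : G => x⁻¹) a v =
      -mfderiv I I (· * a⁻¹) 1 (mfderiv I I (a⁻¹ * ·) a v) := by
  have hR : MDifferentiable I I (· * a⁻¹ : G → G) := contMDiff_mul_right.mdifferentiable hn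
  have hL : MDifferentiable I I (a⁻¹ * · : G → G) := contMDiff_mul_left.mdifferentiable hn
  have hinv : MDifferentiable I I (fun x : G => x⁻¹) := (contMDiff_inv I n).mdifferentiable hn
  have hconj : (fun x : G => x⁻¹) = (· * a⁻¹) ∘ (fun x => x⁻¹) ∘ (a⁻¹ * ·) :=
    funext fun x => by simp
  conv_lhs => rw [hconj]
  refine (mfderiv_comp_apply_of_eq a (hR 1) ((hinv _).comp a (hL a)) (by simp) v).trans ?_
  rw [mfderiv_comp_apply_of_eq a (hinv 1) (hL a) (inv_mul_cancel a)]
  exact (congrArg (mfderiv I I (· * a⁻¹) 1) (mfderiv_inv_one hn _)).trans (map_neg _ _)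

end LieGroup

section Metric

variable {E : Type*} [NormedAddCommGroup E] [NormedSpace ℝ E]
  {H : Type*} [TopologicalSpace H] {I : ModelWithCorners ℝ E H}
  {G : Type*} [TopologicalSpace G] [ChartedSpace H G]

theorem SmoothRiemannianMetric.metric_neg_neg (g : SmoothRiemannianMetric I G) (a : G)
    (u w : E) : g.metric a (-u) (-w) = g.metric a u w := by
  simp

theorem metric_mfderiv_mul_right_mfderiv_inv_mul_left [Group G] {f : G → ℝ}
    {g : SmoothRiemannianMetric I G} (hgl : IsFLeftInvariant I f g)
    (hgr : IsFRightInvariant I f g) (hf1 : f 1 ≠ 0) (a : G) (X Y : TangentSpace I a) :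
    g.metric a⁻¹ (mfderiv I I (· * a⁻¹) 1 (mfderiv I I (a⁻¹ * ·) a X))
        (mfderiv I I (· * a⁻¹) 1 (mfderiv I I (a⁻¹ * ·) a Y)) =
      f a⁻¹ / f a * g.metric a X Y := by
  have hright := hgr 1 a⁻¹ (mfderiv I I (a⁻¹ * ·) a X) (mfderiv I I (a⁻¹ * ·) a Y)
  have hleft := hgl a a⁻¹ X Y
  simp only [one_mul] at hright
  simp only [inv_mul_cancel] at hleft
  rw [hright, hleft]
  field_simp

end Metric

theorem inversion_identity_of_fBiInvariant_general
    {E : Type*} [NormedAddCommGroup E] [NormedSpace ℝ E]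
    {H : Type*} [TopologicalSpace H] (I : ModelWithCorners ℝ E H)
    (G : Type*) [TopologicalSpace G] [ChartedSpace H G] [Group G] [LieGroup I (⊤ : ℕ∞) G]
    (f : G → ℝ) (hfpos : ∀ a, 0 < f a)
    (g : SmoothRiemannianMetric I G)
    (hgl : IsFLeftInvariant I f g) (hgr : IsFRightInvariant I f g) :
    ∀ (a : G) (X Y : TangentSpace I a),
      f a * g.metric a⁻¹ (mfderiv I I (fun x : G => x⁻¹) a X)
          (mfderiv I I (fun x : G => x⁻¹) a Y)
        = f a⁻¹ * g.metric a X Y := by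
  intro a X Y
  have hn : ((⊤ : ℕ∞) : WithTop ℕ∞) ≠ 0 := by simp
  calc f a * g.metric a⁻¹ (mfderiv I I (fun x : G => x⁻¹) a X)
          (mfderiv I I (fun x : G => x⁻¹) a Y)
      = f a * g.metric a⁻¹ (mfderiv I I (· * a⁻¹) 1 (mfderiv I I (a⁻¹ * ·) a X))
          (mfderiv I I (· * a⁻¹) 1 (mfderiv I I (a⁻¹ * ·) a Y)) := by
        rw [mfderiv_inv_apply hn, mfderiv_inv_apply hn]
        -- vectors of `TangentSpace I (a⁻¹ * a)` are fed to maps on `TangentSpace I 1`; both are `E`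
        -- only after unfolding, so `rw` and `simp` reject this goal
        exact congrArg (f a * ·) (g.metric_neg_neg _ _ _)
    _ = f a * (f a⁻¹ / f a * g.metric a X Y) :=
        congrArg (f a * ·)
          (metric_mfderiv_mul_right_mfderiv_inv_mul_left hgl hgr (hfpos 1).ne' a X Y)
    _ = f a⁻¹ * g.metric a X Y := by
        field_simp [(hfpos a).ne']

/-- If an `f`-left invariant Riemannian metric on a Lie group `G` is also
`f`-right invariant (hence `f`-bi-invariant), then for the inversion map `ζ : a ↦ a⁻¹` one has
`f a * ⟨(dζ)ₐ X, (dζ)ₐ Y⟩_{a⁻¹} = f a⁻¹ * ⟨X, Y⟩ₐ`. -/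
theorem inversion_identity_of_fBiInvariant
    {E : Type*} [NormedAddCommGroup E] [NormedSpace ℝ E]
    {H : Type*} [TopologicalSpace H] (I : ModelWithCorners ℝ E H)
    (G : Type*) [TopologicalSpace G] [ChartedSpace H G] [Group G] [LieGroup I (⊤ : ℕ∞) G]
    (f : G → ℝ) (hf : ContMDiff I 𝓘(ℝ, ℝ) (⊤ : ℕ∞) f) (hfpos : ∀ a, 0 < f a) (hfe : f 1 = 1)
    (g : SmoothRiemannianMetric I G)
    (hgl : IsFLeftInvariant I f g) (hgr : IsFRightInvariant I f g) :
    ∀ (a : G) (X Y : TangentSpace I a),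
      f a * g.metric a⁻¹ (mfderiv I I (fun x : G => x⁻¹) a X)
          (mfderiv I I (fun x : G => x⁻¹) a Y)
        = f a⁻¹ * g.metric a X Y :=
  inversion_identity_of_fBiInvariant_general I G f hfpos g hgl hgr
end
end

section
/- Let G be a Lie group with identity e, let f : G → ℝ be a smooth positive function with f(e) = 1, and let ⟨·,·⟩ be an f-left invariant Riemannian metric on G. If for the inversion map ζ : G → G, ζ(a) = a⁻¹, one has f(a)·⟨(dζ)_a X, (dζ)_a Y⟩_{a⁻¹} = f(a⁻¹)·⟨X, Y⟩_a for all a ∈ G and X, Y ∈ T_aG, then ⟨·,·⟩ is also f-right invariant, hence f-bi-invariant. -/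
open scoped Manifold

noncomputable section

/-!
Call `φ : G → G` `f`-conformal if `dφ` rescales the metric by `f (φ a) / f a`. Such maps are closed
under composition, since the factors telescope. Left invariance says every left translation is
`f`-conformal, the hypothesis on `ζ` says `ζ` is, and right translation by `b` is the composite
`ζ ∘ L_{b⁻¹} ∘ ζ`.
-/

def IsFConformal {E : Type*} [NormedAddCommGroup E] [NormedSpace ℝ E]
    {H : Type*} [TopologicalSpace H] (I : ModelWithCorners ℝ E H)
    {G : Type*} [TopologicalSpace G] [ChartedSpace H G]
    (f : G → ℝ) (g : SmoothRiemannianMetric I G) (φ : G → G) : Prop :=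
  ∀ (a : G) (X Y : TangentSpace I a),
    g.metric (φ a) (mfderiv I I φ a X) (mfderiv I I φ a Y) = (f (φ a) / f a) * g.metric a X Y

section FConformal

variable {E : Type*} [NormedAddCommGroup E] [NormedSpace ℝ E]
  {H : Type*} [TopologicalSpace H] {I : ModelWithCorners ℝ E H}
  {G : Type*} [TopologicalSpace G] [ChartedSpace H G]
  {f : G → ℝ} {g : SmoothRiemannianMetric I G}

theorem IsFConformal.comp {φ ψ : G → G} (hφ : IsFConformal I f g φ) (hψ : IsFConformal I f g ψ)
    (hφd : MDifferentiable I I φ) (hψd : MDifferentiable I I ψ) (hf : ∀ a, f a ≠ 0) :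
    IsFConformal I f g (φ ∘ ψ) := by
  intro a X Y
  rw [mfderiv_comp a (hφd (ψ a)) (hψd a)]
  change g.metric (φ (ψ a)) (mfderiv I I φ (ψ a) (mfderiv I I ψ a X))
    (mfderiv I I φ (ψ a) (mfderiv I I ψ a Y)) = _
  rw [hφ, hψ, ← mul_assoc, div_mul_div_cancel₀ (hf (ψ a))]
  rfl

variable [Group G]

theorem isFLeftInvariant_iff :
    IsFLeftInvariant I f g ↔ ∀ b : G, IsFConformal I f g (b * ·) :=
  ⟨fun h b a => h a b, fun h a b => h b a⟩

theorem isFRightInvariant_iff :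
    IsFRightInvariant I f g ↔ ∀ b : G, IsFConformal I f g (· * b) :=
  ⟨fun h b a => h a b, fun h a b => h b a⟩

theorem isFConformal_inv_of_forall_mul_eq (hf : ∀ a, f a ≠ 0)
    (hinv : ∀ (a : G) (X Y : TangentSpace I a),
      f a * g.metric a⁻¹ (mfderiv I I (fun x : G => x⁻¹) a X)
          (mfderiv I I (fun x : G => x⁻¹) a Y)
        = f a⁻¹ * g.metric a X Y) :
    IsFConformal I f g (fun x : G => x⁻¹) := by
  intro a X Y
  rw [div_mul_eq_mul_div, eq_div_iff (hf a), mul_comm, hinv]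

theorem IsFConformal.mul_right {n : WithTop ℕ∞} [LieGroup I n G] (hn : n ≠ 0)
    (hf : ∀ a, f a ≠ 0) (hleft : ∀ b : G, IsFConformal I f g (b * ·))
    (hinv : IsFConformal I f g (fun x : G => x⁻¹)) (b : G) :
    IsFConformal I f g (· * b) := by
  have hinvd : MDifferentiable I I (fun x : G => x⁻¹) := (contMDiff_inv I n).mdifferentiable hn
  have hconj : (· * b) = (fun x : G => x⁻¹) ∘ (b⁻¹ * ·) ∘ (fun x : G => x⁻¹) := by
    funext x
    simp
  rw [hconj]
  exact hinv.comp ((hleft b⁻¹).comp hinv (contMDiff_mul_left.mdifferentiable hn) hinvd hf) hinvd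
    ((contMDiff_mul_left.mdifferentiable hn).comp hinvd) hf

end FConformal

theorem fRightInvariant_of_inversion_identity_general
    {E : Type*} [NormedAddCommGroup E] [NormedSpace ℝ E]
    {H : Type*} [TopologicalSpace H] (I : ModelWithCorners ℝ E H)
    (G : Type*) [TopologicalSpace G] [ChartedSpace H G] [Group G] [LieGroup I (⊤ : ℕ∞) G]
    (f : G → ℝ) (hfpos : ∀ a, 0 < f a)
    (g : SmoothRiemannianMetric I G) (hgl : IsFLeftInvariant I f g)
    (hinv : ∀ (a : G) (X Y : TangentSpace I a),
      f a * g.metric a⁻¹ (mfderiv I I (fun x : G => x⁻¹) a X)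
          (mfderiv I I (fun x : G => x⁻¹) a Y)
        = f a⁻¹ * g.metric a X Y) :
    IsFRightInvariant I f g := by
  have hf : ∀ a, f a ≠ 0 := fun a => (hfpos a).ne'
  rw [isFRightInvariant_iff]
  exact IsFConformal.mul_right (n := (⊤ : ℕ∞)) (by simp) hf (isFLeftInvariant_iff.mp hgl)
    (isFConformal_inv_of_forall_mul_eq hf hinv)

/-- If an `f`-left invariant Riemannian metric on a Lie group `G` satisfies
`f a * ⟨(dζ)ₐ X, (dζ)ₐ Y⟩_{a⁻¹} = f a⁻¹ * ⟨X, Y⟩ₐ` for the inversion map `ζ : a ↦ a⁻¹`, then it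
is also `f`-right invariant, hence `f`-bi-invariant. -/
theorem fRightInvariant_of_inversion_identity
    {E : Type*} [NormedAddCommGroup E] [NormedSpace ℝ E]
    {H : Type*} [TopologicalSpace H] (I : ModelWithCorners ℝ E H)
    (G : Type*) [TopologicalSpace G] [ChartedSpace H G] [Group G] [LieGroup I (⊤ : ℕ∞) G]
    (f : G → ℝ) (hf : ContMDiff I 𝓘(ℝ, ℝ) (⊤ : ℕ∞) f) (hfpos : ∀ a, 0 < f a) (hfe : f 1 = 1)
    (g : SmoothRiemannianMetric I G) (hgl : IsFLeftInvariant I f g)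
    (hinv : ∀ (a : G) (X Y : TangentSpace I a),
      f a * g.metric a⁻¹ (mfderiv I I (fun x : G => x⁻¹) a X)
          (mfderiv I I (fun x : G => x⁻¹) a Y)
        = f a⁻¹ * g.metric a X Y) :
    IsFRightInvariant I f g :=
  fRightInvariant_of_inversion_identity_general I G f hfpos g hgl hinv
end
end
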